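/- arXiv:1205.1950 — 3 statements merged into one kernel-verified Lean document; each statement's English description precedes it below -/
import Mathlib

section
/- For every α ∈ [0,1) and all Borel probability measures P₁, P₂ on ℝ, the following are equivalent: (a) P₁ and P₂ are α-similar; (b) R_α(P₁) ∩ R_α(P₂) ≠ ∅; (c) d_TV(P₁,P₂) ≤ α. -/
open MeasureTheory ProbabilityTheory Filter Topology Asymptotics
open scoped ENNReal NNReal

noncomputable section

/-- The (cumulative) distribution function of a Borel measure on `ℝ`. -/
def distFun (P : Measure ℝ) (x : ℝ) : ℝ := (P (Set.Iic x)).toReal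

/-- The quantile function (left-continuous generalized inverse of the distribution
function) of a Borel measure on `ℝ`. -/
def quant (P : Measure ℝ) (t : ℝ) : ℝ := sInf {x : ℝ | t ≤ distFun P x}

/-- The quadratic Wasserstein distance between two probabilities on the line,
expressed as the `L²` distance between quantile functions. -/
def W2 (P Q : Measure ℝ) : ℝ :=
  Real.sqrt (∫ t in Set.Ioo (0 : ℝ) 1, (quant P t - quant Q t) ^ 2)

/-- `W₂` distance between two sets of probabilities. -/
def W2Set (A B : Set (Measure ℝ)) : ℝ :=
  sInf {d : ℝ | ∃ R₁ ∈ A, ∃ R₂ ∈ B, d = W2 R₁ R₂}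

/-- `W₂` distance between a set of probabilities and a fixed probability. -/
def W2SetPt (A : Set (Measure ℝ)) (Q : Measure ℝ) : ℝ :=
  sInf {d : ℝ | ∃ R ∈ A, d = W2 R Q}

/-- The total variation distance `sup_B |P(B) - Q(B)|` over Borel sets `B`. -/
def dTV (P Q : Measure ℝ) : ℝ :=
  sSup {d : ℝ | ∃ B : Set ℝ, MeasurableSet B ∧ d = |(P B).toReal - (Q B).toReal|}

/-- The set of `α`-trimmed versions of `P`: probabilities `Q ≪ P` with
`dQ/dP ≤ 1/(1-α)` `P`-a.s. -/
def trimmings (α : ℝ) (P : Measure ℝ) : Set (Measure ℝ) :=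
  {Q | IsProbabilityMeasure Q ∧ Q ≪ P ∧
    ∀ᵐ x ∂P, Q.rnDeriv P x ≤ ENNReal.ofReal (1 / (1 - α))}

/-- The mixture `(1-ε)•P₀ + ε•P'`. -/
def mix (ε : ℝ) (P₀ P' : Measure ℝ) : Measure ℝ :=
  ENNReal.ofReal (1 - ε) • P₀ + ENNReal.ofReal ε • P'

/-- `P₁` and `P₂` are `α`-similar: both are contaminations (of size at most `α`)
of a common probability `P₀`. -/
def AlphaSimilar (α : ℝ) (P₁ P₂ : Measure ℝ) : Prop :=
  ∃ P₀ P₁' P₂' : Measure ℝ, ∃ ε₁ ε₂ : ℝ,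
    IsProbabilityMeasure P₀ ∧ IsProbabilityMeasure P₁' ∧ IsProbabilityMeasure P₂' ∧
    0 ≤ ε₁ ∧ ε₁ ≤ α ∧ 0 ≤ ε₂ ∧ ε₂ ≤ α ∧
    P₁ = mix ε₁ P₀ P₁' ∧ P₂ = mix ε₂ P₀ P₂'

/-- Membership in `F₂`: finite second moment. -/
def FiniteSecondMoment (P : Measure ℝ) : Prop :=
  ∫⁻ x, ENNReal.ofReal (x ^ 2) ∂P < ⊤

/-- Empirical measure of the first `n` variables of a sequence. -/
def empSeq {Ω : Type*} (X : ℕ → Ω → ℝ) (n : ℕ) (ω : Ω) : Measure ℝ :=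
  (n : ℝ≥0∞)⁻¹ • ∑ i ∈ Finset.range n, Measure.dirac (X i ω)

/-- Convergence in probability to a constant. -/
def TendstoInProb {Ω : Type*} [MeasurableSpace Ω] (Pr : Measure Ω)
    (f : ℕ → Ω → ℝ) (c : ℝ) : Prop :=
  ∀ ε > 0, Tendsto (fun n => Pr {ω | ε ≤ |f n ω - c|}) atTop (𝓝 0)

/-- `P` has density `f` (w.r.t. Lebesgue measure) which is bounded away from zero on
its support and has a bounded derivative (on the interior of the support). -/
structure NiceDensity (P : Measure ℝ) (f : ℝ → ℝ) : Prop where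
  nonneg : ∀ x, 0 ≤ f x
  meas : Measurable f
  eq : P = volume.withDensity fun x => ENNReal.ofReal (f x)
  pos : ∃ c > 0, ∀ x ∈ Function.support f, c ≤ f x
  diff : DifferentiableOn ℝ f (interior (Function.support f))
  bddDeriv : ∃ M, ∀ x ∈ interior (Function.support f), |deriv f x| ≤ M

/-- Empirical measure of the coordinates of a vector indexed by a finset. -/
def empVec {N : ℕ} (v : Fin N → ℝ) (s : Finset (Fin N)) : Measure ℝ :=
  (s.card : ℝ≥0∞)⁻¹ • ∑ i ∈ s, Measure.dirac (v i)

/-- The bootstrap p-value: the probability, under `R^{⊗(n'+m')}`, that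
`√(n'm'/(n'+m')) W₂(P*_{n'}, Q*_{m'})` exceeds the threshold `c`, where `P*_{n'}` and
`Q*_{m'}` are the empirical measures of the first `n'` and last `m'` coordinates. -/
def bootPval (R : Measure ℝ) (n' m' : ℕ) (c : ℝ) : ℝ :=
  ((Measure.pi fun _ : Fin (n' + m') => R)
    {v | c < Real.sqrt ((n' * m' : ℝ) / (n' + m')) *
      W2 (empVec v (Finset.univ.filter fun i => (i : ℕ) < n'))
         (empVec v (Finset.univ.filter fun i => n' ≤ (i : ℕ)))}).toReal

/-! A probability `Q` is an `α`-trimming of `P` exactly when `(1 - α) • Q ≤ P`, so a common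
trimming is a common minorant of `P₁` and `P₂` of mass `1 - α`. Such a minorant `Q` yields the
contamination model with `P₀ = Q`, `ε₁ = ε₂ = α`, and conversely `P₀` is one; it also forces
`P₁ B - P₂ B ≤ 1 - (1 - α) (Q Bᶜ + Q B) = α`. Conversely, if `d_TV(P₁, P₂) ≤ α`, the largest
common minorant `P₁ ⊓ P₂` has mass `⨅ B, P₁ B + P₂ Bᶜ ≥ 1 - α`, and its normalization is a
common trimming. -/

namespace MeasureTheory.Measure

variable {Ω : Type*} [MeasurableSpace Ω]

lemma rnDeriv_le_of_le_smul {μ ν : Measure Ω} [SigmaFinite ν] {c : ℝ≥0∞} (h : μ ≤ c • ν) :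
    μ.rnDeriv ν ≤ᵐ[ν] fun _ => c :=
  ae_le_of_forall_setLIntegral_le_of_sigmaFinite (measurable_rnDeriv μ ν) fun s _ _ =>
    calc ∫⁻ x in s, μ.rnDeriv ν x ∂ν ≤ μ s := setLIntegral_rnDeriv_le s
      _ ≤ c * ν s := h s
      _ = ∫⁻ _ in s, c ∂ν := (setLIntegral_const s c).symm

lemma exists_isProbabilityMeasure_eq_smul [Nonempty Ω] (μ : Measure Ω) [IsFiniteMeasure μ] :
    ∃ P : Measure Ω, IsProbabilityMeasure P ∧ μ = μ Set.univ • P := by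
  rcases eq_zero_or_neZero μ with rfl | _
  · exact ⟨dirac (Classical.arbitrary Ω), inferInstance, by simp⟩
  · refine ⟨μ[|Set.univ], ProbabilityTheory.cond_isProbabilityMeasure (NeZero.ne _), ?_⟩
    rw [ProbabilityTheory.cond, Measure.restrict_univ, smul_smul,
      ENNReal.mul_inv_cancel (NeZero.ne _) (measure_ne_top μ _), one_smul]

lemma le_inf_apply_univ {μ ν : Measure Ω} {c : ℝ≥0∞}
    (h : ∀ t, MeasurableSet t → c ≤ μ t + ν tᶜ) : c ≤ (μ ⊓ ν) Set.univ := by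
  rw [inf_apply MeasurableSet.univ]
  refine le_sInf fun _ ⟨t, ht⟩ => ht ▸ ?_
  simp only [Set.inter_univ]
  -- `inf_apply` ranges over arbitrary sets `t`, so pass to a measurable hull
  calc c ≤ μ (toMeasurable μ t) + ν (toMeasurable μ t)ᶜ := h _ (measurableSet_toMeasurable μ t)
    _ ≤ μ t + ν tᶜ := by
      rw [measure_toMeasurable]
      gcongr
      exact subset_toMeasurable μ t

end MeasureTheory.Measure

lemma mem_trimmings_iff {α : ℝ} (hα1 : α < 1) {P Q : Measure ℝ} [SigmaFinite P] :
    Q ∈ trimmings α P ↔ IsProbabilityMeasure Q ∧ ENNReal.ofReal (1 - α) • Q ≤ P := by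
  set c := ENNReal.ofReal (1 - α)
  have hc₀ : c ≠ 0 := by simpa [c] using hα1
  have hc : c • c⁻¹ • P = P := by
    rw [smul_smul, ENNReal.mul_inv_cancel hc₀ ENNReal.ofReal_ne_top, one_smul]
  rw [trimmings, Set.mem_ofPred_eq, one_div, ENNReal.ofReal_inv_of_pos (by linarith)]
  refine and_congr_right fun hQ => ⟨fun ⟨hQP, hbound⟩ => ?_, fun h => ?_⟩
  · calc c • Q = c • P.withDensity (Q.rnDeriv P) := by rw [Measure.withDensity_rnDeriv_eq _ _ hQP]
      _ ≤ c • P.withDensity (fun _ => c⁻¹) := by gcongr; exact withDensity_mono hbound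
      _ = P := by rw [withDensity_const, hc]
  · have hQP : Q ≤ c⁻¹ • P := by
      calc Q = c⁻¹ • c • Q := by
            rw [smul_smul, ENNReal.inv_mul_cancel hc₀ ENNReal.ofReal_ne_top, one_smul]
        _ ≤ c⁻¹ • P := by gcongr
    exact ⟨Measure.absolutelyContinuous_of_le_smul hQP, Measure.rnDeriv_le_of_le_smul hQP⟩

lemma trimmings_inter_nonempty_iff {α : ℝ} (hα1 : α < 1) {P₁ P₂ : Measure ℝ} [SigmaFinite P₁]
    [SigmaFinite P₂] :
    (trimmings α P₁ ∩ trimmings α P₂).Nonempty ↔ ∃ Q : Measure ℝ,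
      IsProbabilityMeasure Q ∧ ENNReal.ofReal (1 - α) • Q ≤ P₁ ∧
        ENNReal.ofReal (1 - α) • Q ≤ P₂ := by
  simp only [Set.Nonempty, Set.mem_inter_iff, mem_trimmings_iff hα1]
  exact exists_congr fun Q => ⟨fun ⟨⟨hQ, h₁⟩, ⟨_, h₂⟩⟩ => ⟨hQ, h₁, h₂⟩,
    fun ⟨hQ, h₁, h₂⟩ => ⟨⟨hQ, h₁⟩, ⟨hQ, h₂⟩⟩⟩

lemma smul_le_mix {α ε : ℝ} (hεα : ε ≤ α) (P₀ P' : Measure ℝ) :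
    ENNReal.ofReal (1 - α) • P₀ ≤ mix ε P₀ P' :=
  calc ENNReal.ofReal (1 - α) • P₀ ≤ ENNReal.ofReal (1 - ε) • P₀ := by gcongr
    _ ≤ mix ε P₀ P' := Measure.le_add_right le_rfl

lemma exists_mix_eq_of_smul_le {α : ℝ} (hα1 : α ≤ 1) {P Q : Measure ℝ} [IsProbabilityMeasure P]
    [IsProbabilityMeasure Q] (h : ENNReal.ofReal (1 - α) • Q ≤ P) :
    ∃ P' : Measure ℝ, IsProbabilityMeasure P' ∧ P = mix α Q P' := by
  have := isFiniteMeasure_of_le P h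
  obtain ⟨P', hP', hrest⟩ :=
    Measure.exists_isProbabilityMeasure_eq_smul (P - ENNReal.ofReal (1 - α) • Q)
  have hmass : (P - ENNReal.ofReal (1 - α) • Q) Set.univ = ENNReal.ofReal α := by
    rw [Measure.sub_apply MeasurableSet.univ h, Measure.smul_apply, measure_univ, measure_univ,
      smul_eq_mul, mul_one, ← ENNReal.ofReal_one, ← ENNReal.ofReal_sub _ (by linarith)]
    ring_nf
  refine ⟨P', hP', ?_⟩
  rw [mix, ← hmass, ← hrest, add_comm, Measure.sub_add_cancel_of_le h]

lemma dTV_le_iff {P Q : Measure ℝ} [IsProbabilityMeasure P] [IsProbabilityMeasure Q] {α : ℝ} :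
    dTV P Q ≤ α ↔ ∀ B, MeasurableSet B → |P.real B - Q.real B| ≤ α := by
  have hbdd : BddAbove {d : ℝ | ∃ B : Set ℝ, MeasurableSet B ∧ d = |P.real B - Q.real B|} := by
    refine ⟨1, fun _ ⟨B, _, hd⟩ => hd ▸ abs_sub_le_iff.mpr ⟨?_, ?_⟩⟩ <;>
      linarith [measureReal_le_one (μ := P) (s := B), measureReal_le_one (μ := Q) (s := B),
        measureReal_nonneg (μ := P) (s := B), measureReal_nonneg (μ := Q) (s := B)]
  refine ⟨fun h B hB => (le_csSup hbdd ⟨B, hB, rfl⟩).trans h, fun h => csSup_le ?_ ?_⟩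
  · exact ⟨_, ∅, MeasurableSet.empty, rfl⟩
  · rintro _ ⟨B, hB, rfl⟩
    exact h B hB

lemma measureReal_sub_le_of_smul_le {α : ℝ} (hα1 : α ≤ 1) {P₁ P₂ Q : Measure ℝ}
    [IsProbabilityMeasure P₁] [IsProbabilityMeasure P₂] [IsProbabilityMeasure Q]
    (h₁ : ENNReal.ofReal (1 - α) • Q ≤ P₁) (h₂ : ENNReal.ofReal (1 - α) • Q ≤ P₂)
    {B : Set ℝ} (hB : MeasurableSet B) : P₁.real B - P₂.real B ≤ α := by
  have hle : ∀ P : Measure ℝ, [IsFiniteMeasure P] → ENNReal.ofReal (1 - α) • Q ≤ P →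
      ∀ s, (1 - α) * Q.real s ≤ P.real s := fun P _ h s => by
    simpa [measureReal_def, ENNReal.toReal_ofReal (by linarith : (0 : ℝ) ≤ 1 - α)] using
      ENNReal.toReal_mono (measure_ne_top P s) (h s)
  have hP₁ := hle P₁ h₁ Bᶜ
  have hP₂ := hle P₂ h₂ B
  rw [probReal_compl_eq_one_sub hB, probReal_compl_eq_one_sub hB] at hP₁
  linarith

lemma ofReal_one_sub_le_inf_apply_univ {α : ℝ} {P₁ P₂ : Measure ℝ} [IsProbabilityMeasure P₁]
    [IsProbabilityMeasure P₂] (h : dTV P₁ P₂ ≤ α) :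
    ENNReal.ofReal (1 - α) ≤ (P₁ ⊓ P₂) Set.univ := by
  refine Measure.le_inf_apply_univ fun t ht => ?_
  rw [ENNReal.ofReal_le_iff_le_toReal (by finiteness), ENNReal.toReal_add (by finiteness)
    (by finiteness)]
  have := (abs_sub_le_iff.mp (dTV_le_iff.mp h t ht)).2
  change 1 - α ≤ P₁.real t + P₂.real tᶜ
  rw [probReal_compl_eq_one_sub ht]
  linarith

/-- For `α ∈ [0,1)` and Borel probability measures `P₁, P₂` on `ℝ`,
the following are equivalent: (a) `P₁` and `P₂` are `α`-similar;
(b) `R_α(P₁) ∩ R_α(P₂) ≠ ∅`; (c) `d_TV(P₁,P₂) ≤ α`. -/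
theorem similar_iff_trimmings_inter_nonempty_iff_dTV_le
    (α : ℝ) (hα0 : 0 ≤ α) (hα1 : α < 1)
    (P₁ P₂ : Measure ℝ) (h₁ : IsProbabilityMeasure P₁) (h₂ : IsProbabilityMeasure P₂) :
    (AlphaSimilar α P₁ P₂ ↔ (trimmings α P₁ ∩ trimmings α P₂).Nonempty) ∧
    ((trimmings α P₁ ∩ trimmings α P₂).Nonempty ↔ dTV P₁ P₂ ≤ α) := by
  rw [trimmings_inter_nonempty_iff hα1]
  refine ⟨⟨?_, ?_⟩, ?_, ?_⟩
  · rintro ⟨P₀, P₁', P₂', ε₁, ε₂, hP₀, -, -, -, hε₁, -, hε₂, rfl, rfl⟩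
    exact ⟨P₀, hP₀, smul_le_mix hε₁ P₀ P₁', smul_le_mix hε₂ P₀ P₂'⟩
  · rintro ⟨Q, hQ, hQ₁, hQ₂⟩
    obtain ⟨P₁', hP₁', rfl⟩ := exists_mix_eq_of_smul_le hα1.le hQ₁
    obtain ⟨P₂', hP₂', rfl⟩ := exists_mix_eq_of_smul_le hα1.le hQ₂
    exact ⟨Q, P₁', P₂', α, α, hQ, hP₁', hP₂', hα0, le_rfl, hα0, le_rfl, rfl, rfl⟩
  · rintro ⟨Q, hQ, hQ₁, hQ₂⟩
    refine dTV_le_iff.mpr fun B hB => abs_sub_le_iff.mpr ⟨?_, ?_⟩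
    · exact measureReal_sub_le_of_smul_le hα1.le hQ₁ hQ₂ hB
    · exact measureReal_sub_le_of_smul_le hα1.le hQ₂ hQ₁ hB
  · intro h
    have := isFiniteMeasure_of_le P₁ (inf_le_left : P₁ ⊓ P₂ ≤ P₁)
    obtain ⟨Q, hQ, hQeq⟩ := Measure.exists_isProbabilityMeasure_eq_smul (P₁ ⊓ P₂)
    have hQ_le : ENNReal.ofReal (1 - α) • Q ≤ P₁ ⊓ P₂ := by
      rw [hQeq]
      gcongr
      exact ofReal_one_sub_le_inf_apply_univ h
    exact ⟨Q, hQ, hQ_le.trans inf_le_left, hQ_le.trans inf_le_right⟩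

end
end

section
/- Let α ∈ [0,1) and let P, Q be Borel probability measures on ℝ. Then Q ∈ R_α(P) if and only if there exists a Borel probability measure P′ on ℝ such that P = (1−α)Q + αP′. -/
open MeasureTheory ProbabilityTheory Filter Topology Asymptotics
open scoped ENNReal NNReal

noncomputable section

/-! Both conditions are equivalent to `(1 - α) • Q ≤ P`. For the trimming condition this is
the density bound `d((1 - α) • Q)/dP ≤ 1`; for the contamination it holds because
`P - (1 - α) • Q` is a measure of mass `α`, which rescaled by `α⁻¹` is the contaminating
probability `P'`. -/

section

variable {X : Type*} [MeasurableSpace X]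

theorem smul_le_iff_rnDeriv_le {μ ν : Measure X} [IsFiniteMeasure ν] [SigmaFinite μ]
    {c : ℝ≥0∞} (hc0 : c ≠ 0) (hc : c ≠ ∞) :
    c • ν ≤ μ ↔ ν ≪ μ ∧ ∀ᵐ x ∂μ, ν.rnDeriv μ x ≤ c⁻¹ := by
  have hν : ν ≪ c • ν := Measure.absolutelyContinuous_smul hc0
  refine ⟨fun h => ⟨hν.trans (Measure.absolutelyContinuous_of_le h), ?_⟩,
    fun ⟨hνμ, hbd⟩ => ?_⟩
  · filter_upwards [Measure.rnDeriv_le_one_of_le h,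
      Measure.rnDeriv_smul_left_of_ne_top ν μ hc] with x hle heq
    rw [ENNReal.le_inv_iff_mul_le, mul_comm]
    simpa [heq] using hle
  · refine (Measure.rnDeriv_le_one_iff_le (hνμ.smul_left c)).mp ?_
    filter_upwards [hbd, Measure.rnDeriv_smul_left_of_ne_top ν μ hc] with x hle heq
    rw [ENNReal.le_inv_iff_mul_le, mul_comm] at hle
    simpa [heq] using hle

theorem exists_isProbabilityMeasure_eq_add_smul {μ ν : Measure X} [IsFiniteMeasure ν]
    (hνμ : ν ≤ μ) {a : ℝ≥0∞} (ha0 : a ≠ 0) (ha : a ≠ ∞) (hmass : μ Set.univ = ν Set.univ + a) :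
    ∃ ρ : Measure X, IsProbabilityMeasure ρ ∧ μ = ν + a • ρ := by
  refine ⟨a⁻¹ • (μ - ν), ⟨?_⟩, ?_⟩
  · rw [Measure.smul_apply, Measure.sub_apply MeasurableSet.univ hνμ, hmass,
      ENNReal.add_sub_cancel_left (measure_ne_top ν _), smul_eq_mul,
      ENNReal.inv_mul_cancel ha0 ha]
  · rw [smul_smul, ENNReal.mul_inv_cancel ha0 ha, one_smul, add_comm,
      Measure.sub_add_cancel_of_le hνμ]

end

theorem mem_trimmings_iff_smul_le {α : ℝ} (hα1 : α < 1) {P Q : Measure ℝ} [SigmaFinite P]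
    [IsProbabilityMeasure Q] :
    Q ∈ trimmings α P ↔ ENNReal.ofReal (1 - α) • Q ≤ P := by
  have hα : 0 < 1 - α := by linarith
  rw [smul_le_iff_rnDeriv_le (by simpa using hα) ENNReal.ofReal_ne_top,
    ← ENNReal.ofReal_inv_of_pos hα, ← one_div]
  simp [trimmings, ‹IsProbabilityMeasure Q›]

theorem exists_eq_mix_iff_smul_le {α : ℝ} (hα0 : 0 ≤ α) (hα1 : α < 1) {P Q : Measure ℝ}
    [IsProbabilityMeasure P] [IsProbabilityMeasure Q] :
    (∃ P' : Measure ℝ, IsProbabilityMeasure P' ∧ P = mix α Q P') ↔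
      ENNReal.ofReal (1 - α) • Q ≤ P := by
  refine ⟨fun ⟨P', _, hP⟩ => hP ▸ Measure.le_add_right le_rfl, fun hle => ?_⟩
  rcases hα0.eq_or_lt with rfl | hα
  · refine ⟨P, inferInstance, ?_⟩
    simp only [sub_zero, ENNReal.ofReal_one, one_smul] at hle
    simp [mix, Measure.eq_of_le_of_isProbabilityMeasure hle]
  · have hmass : P Set.univ = (ENNReal.ofReal (1 - α) • Q) Set.univ + ENNReal.ofReal α := by
      rw [Measure.smul_apply, measure_univ, measure_univ, smul_eq_mul, mul_one,
        ← ENNReal.ofReal_add (by linarith) hα0]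
      simp
    have := isFiniteMeasure_of_le P hle
    exact exists_isProbabilityMeasure_eq_add_smul hle (by simpa using hα)
      ENNReal.ofReal_ne_top hmass

/-- `Q ∈ R_α(P)` iff `P = (1-α)Q + αP'` for some probability `P'`,
i.e. `Q` is an `α`-trimming of `P` exactly when `P` lies in the contamination
neighbourhood `V_α(Q)`. -/
theorem mem_trimmings_iff_contamination
    (α : ℝ) (hα0 : 0 ≤ α) (hα1 : α < 1)
    (P Q : Measure ℝ) (hP : IsProbabilityMeasure P) (hQ : IsProbabilityMeasure Q) :
    Q ∈ trimmings α P ↔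
      ∃ P' : Measure ℝ, IsProbabilityMeasure P' ∧ P = mix α Q P' := by
  rw [mem_trimmings_iff_smul_le hα1, exists_eq_mix_iff_smul_le hα0 hα1]

end
end

section
/- Let α ∈ [0,1), let P, Q ∈ F₂ have quantile functions F⁻¹ and G⁻¹, and let h ∈ C_α. Then W₂²(P_h, Q_h) = ∫₀¹ (F⁻¹(h⁻¹(x)) − G⁻¹(h⁻¹(x)))² dx = ∫₀¹ (F⁻¹(y) − G⁻¹(y))² h′(y) dy. -/
open MeasureTheory ProbabilityTheory Filter Topology Asymptotics
open scoped ENNReal NNReal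

noncomputable section

/-- `P₁` and `P₂` are `α`-similar: both are contaminations (of size at most `α`)
of a common probability `P₀`. -/
def SimilarMeas (α : ℝ) (P₁ P₂ : Measure ℝ) : Prop :=
  ∃ P₀ P₁' P₂' : Measure ℝ, ∃ ε₁ ε₂ : ℝ,
    IsProbabilityMeasure P₀ ∧ IsProbabilityMeasure P₁' ∧ IsProbabilityMeasure P₂' ∧
    0 ≤ ε₁ ∧ ε₁ ≤ α ∧ 0 ≤ ε₂ ∧ ε₂ ≤ α ∧
    P₁ = mix ε₁ P₀ P₁' ∧ P₂ = mix ε₂ P₀ P₂'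

/-- `h` belongs to `C_α`, with (a.e.) derivative `h'`: `h` is absolutely continuous on
`[0,1]` (it is the integral of `h'`), `h 0 = 0`, `h 1 = 1` and `0 ≤ h' ≤ 1/(1-α)`
almost everywhere on `[0,1]`. -/
def IsTrimmingFun (α : ℝ) (h h' : ℝ → ℝ) : Prop :=
  Measurable h' ∧
  (∀ᵐ y ∂(volume.restrict (Set.Icc (0 : ℝ) 1)), 0 ≤ h' y ∧ h' y ≤ 1 / (1 - α)) ∧
  (∀ x ∈ Set.Icc (0 : ℝ) 1, h x = ∫ y in Set.Ioc (0 : ℝ) x, h' y) ∧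
  h 1 = 1

/-- Generalized inverse of a function on `[0,1]`. -/
def funInv (h : ℝ → ℝ) (t : ℝ) : ℝ := sInf {x | x ∈ Set.Icc (0 : ℝ) 1 ∧ t ≤ h x}

/-! Because `h` is continuous and nondecreasing on `[0,1]` with `h 1 = 1`, its generalized
inverse satisfies the Galois connection `h⁻¹ t ≤ u ↔ t ≤ h u`. Applied to `u = F x` this shows
that the quantile function of `P_h` is `F⁻¹ ∘ h⁻¹`, which is the first identity. Applied to
Lebesgue measure on `(0,1]`, it shows that the image of that measure under `h⁻¹` has
distribution function `h = ∫₀^· h'`, so it is the measure with density `h'`; integrating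
`(F⁻¹ - G⁻¹)²` against both gives the second identity. -/

open Set

lemma monotoneOn_funInv (h : ℝ → ℝ) : MonotoneOn (funInv h) (Iic (h 1)) :=
  fun _ _ _ ht' htt' => csInf_le_csInf ⟨0, fun _ hx => hx.1.1⟩ ⟨1, ⟨zero_le_one, le_rfl⟩, ht'⟩
    fun _ hx => ⟨hx.1, htt'.trans hx.2⟩

section GeneralizedInverse

variable {h : ℝ → ℝ} {t u : ℝ}

lemma funInv_mem (hc : ContinuousOn h (Icc 0 1)) (ht : t ≤ h 1) :
    funInv h t ∈ Icc 0 1 ∧ t ≤ h (funInv h t) :=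
  (hc.preimage_isClosed_of_isClosed isClosed_Icc isClosed_Ici).csInf_mem
    ⟨1, ⟨zero_le_one, le_rfl⟩, ht⟩ ⟨0, fun _ hx => hx.1.1⟩

lemma funInv_le_iff (hc : ContinuousOn h (Icc 0 1)) (hm : MonotoneOn h (Icc 0 1))
    (ht : t ≤ h 1) (hu : u ∈ Icc 0 1) : funInv h t ≤ u ↔ t ≤ h u :=
  ⟨fun hle => (funInv_mem hc ht).2.trans (hm (funInv_mem hc ht).1 hu hle),
    fun htu => csInf_le ⟨0, fun _ hx => hx.1.1⟩ ⟨hu, htu⟩⟩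

end GeneralizedInverse

lemma W2_sq (P Q : Measure ℝ) : W2 P Q ^ 2 = ∫ t in Ioo 0 1, (quant P t - quant Q t) ^ 2 :=
  Real.sq_sqrt (integral_nonneg fun _ => sq_nonneg _)

section Quantile

variable (R : Measure ℝ) [IsProbabilityMeasure R]

lemma distFun_eq_cdf : distFun R = cdf R :=
  funext fun x => (cdf_eq_real R x).symm

lemma monotoneOn_quant : MonotoneOn (quant R) (Ioo 0 1) := by
  intro t ht t' ht' htt'
  obtain ⟨x₀, hx₀⟩ :=
    eventually_atBot.1 ((tendsto_cdf_atBot R).eventually (eventually_lt_nhds ht.1))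
  have hbdd : BddBelow {x | t ≤ cdf R x} :=
    ⟨x₀, fun x hx => by
      by_contra! hxx
      exact (hx₀ x hxx.le).not_ge hx⟩
  have hne : {x | t' ≤ cdf R x}.Nonempty :=
    ((tendsto_cdf_atTop R).eventually (eventually_ge_nhds ht'.2)).exists
  simp only [quant, distFun_eq_cdf]
  exact csInf_le_csInf hbdd hne fun x hx => htt'.trans hx

lemma aemeasurable_quant : AEMeasurable (quant R) (volume.restrict (Ioo 0 1)) :=
  aemeasurable_restrict_of_monotoneOn measurableSet_Ioo (monotoneOn_quant R)

lemma quant_eq_quant_funInv {h : ℝ → ℝ} (hc : ContinuousOn h (Icc 0 1))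
    (hm : MonotoneOn h (Icc 0 1)) {Rh : Measure ℝ} (hcdf : ∀ x, distFun Rh x = h (distFun R x))
    {t : ℝ} (ht : t ≤ h 1) : quant Rh t = quant R (funInv h t) := by
  simp only [quant, hcdf, distFun_eq_cdf R]
  congr 1
  ext x
  exact (funInv_le_iff hc hm ht ⟨cdf_nonneg R x, cdf_le_one R x⟩).symm

end Quantile

namespace IsTrimmingFun

variable {α : ℝ} {h h' : ℝ → ℝ}

lemma integrableOn_Icc (hh : IsTrimmingFun α h h') : IntegrableOn h' (Icc 0 1) :=
  Integrable.mono' (integrable_const (1 / (1 - α))) hh.1.aestronglyMeasurable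
    (hh.2.1.mono fun _ hy => by rw [Real.norm_eq_abs, abs_of_nonneg hy.1]; exact hy.2)

lemma integrableOn_Ioc (hh : IsTrimmingFun α h h') {a : ℝ} (ha : a ≤ 1) :
    IntegrableOn h' (Ioc 0 a) :=
  hh.integrableOn_Icc.mono_set fun _ hx => ⟨hx.1.le, hx.2.trans ha⟩

lemma nonneg_ae_Ioc (hh : IsTrimmingFun α h h') {a : ℝ} (ha : a ≤ 1) :
    0 ≤ᵐ[volume.restrict (Ioc 0 a)] h' :=
  (ae_restrict_of_ae_restrict_of_subset
    (show Ioc 0 a ⊆ Icc 0 1 from fun _ hx => ⟨hx.1.le, hx.2.trans ha⟩) hh.2.1).mono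
    fun _ hy => hy.1

lemma ofReal_eq_lintegral (hh : IsTrimmingFun α h h') {a : ℝ} (ha : a ∈ Icc 0 1) :
    ENNReal.ofReal (h a) = ∫⁻ y in Ioc 0 a, ENNReal.ofReal (h' y) := by
  rw [hh.2.2.1 a ha]
  exact ofReal_integral_eq_lintegral_ofReal (hh.integrableOn_Ioc ha.2) (hh.nonneg_ae_Ioc ha.2)

lemma monotoneOn (hh : IsTrimmingFun α h h') : MonotoneOn h (Icc 0 1) := fun a ha b hb hab => by
  rw [hh.2.2.1 a ha, hh.2.2.1 b hb]
  exact setIntegral_mono_set (hh.integrableOn_Ioc hb.2) (hh.nonneg_ae_Ioc hb.2)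
    (Ioc_subset_Ioc_right hab).eventuallyLE

lemma continuousOn (hh : IsTrimmingFun α h h') : ContinuousOn h (Icc 0 1) :=
  (intervalIntegral.continuousOn_primitive hh.integrableOn_Icc).congr fun x hx => hh.2.2.1 x hx

lemma aemeasurable_funInv (hh : IsTrimmingFun α h h') :
    AEMeasurable (funInv h) (volume.restrict (Ioc 0 1)) :=
  aemeasurable_restrict_of_monotoneOn measurableSet_Ioc
    ((monotoneOn_funInv h).mono fun _ hx => hh.2.2.2.symm ▸ hx.2)

lemma map_funInv (hh : IsTrimmingFun α h h') :
    (volume.restrict (Ioc 0 1)).map (funInv h) =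
      (volume.restrict (Ioc 0 1)).withDensity fun y => ENNReal.ofReal (h' y) := by
  have h1 : h 1 = 1 := hh.2.2.2
  have hmem : ∀ x ∈ Ioc (0 : ℝ) 1, funInv h x ∈ Icc 0 1 := fun x hx =>
    (funInv_mem hh.continuousOn (h1.symm ▸ hx.2)).1
  refine Measure.ext_of_Iic _ _ fun a => ?_
  rw [Measure.map_apply_of_aemeasurable hh.aemeasurable_funInv measurableSet_Iic,
    Measure.restrict_apply' measurableSet_Ioc, withDensity_apply _ measurableSet_Iic,
    Measure.restrict_restrict measurableSet_Iic]
  rcases lt_or_ge a 0 with ha0 | ha0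
  · have hempty : funInv h ⁻¹' Iic a ∩ Ioc 0 1 = ∅ :=
      eq_empty_of_forall_notMem fun x hx => ((hmem x hx.2).1.trans hx.1).not_gt ha0
    rw [hempty, Iic_inter_Ioc_of_le (by linarith), Ioc_eq_empty (by linarith)]
    simp
  rcases le_or_gt a 1 with ha1 | ha1
  · have hpre : funInv h ⁻¹' Iic a ∩ Ioc 0 1 = Iic (h a) ∩ Ioc 0 1 := by
      ext x
      exact and_congr_left fun hx =>
        funInv_le_iff hh.continuousOn hh.monotoneOn (h1.symm ▸ hx.2) ⟨ha0, ha1⟩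
    have hha : h a ≤ 1 := h1 ▸ hh.monotoneOn ⟨ha0, ha1⟩ ⟨zero_le_one, le_rfl⟩ ha1
    rw [hpre, Iic_inter_Ioc_of_le hha, Iic_inter_Ioc_of_le ha1, Real.volume_Ioc, sub_zero,
      hh.ofReal_eq_lintegral ⟨ha0, ha1⟩]
  · have hpre : funInv h ⁻¹' Iic a ∩ Ioc 0 1 = Ioc 0 1 :=
      inter_eq_right.2 fun x hx => (hmem x hx).2.trans ha1.le
    rw [hpre, inter_eq_right.2 fun y hy => hy.2.trans ha1.le, Real.volume_Ioc, sub_zero,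
      ← hh.ofReal_eq_lintegral ⟨zero_le_one, le_rfl⟩, h1]

lemma integral_comp_funInv (hh : IsTrimmingFun α h h') {g : ℝ → ℝ}
    (hg : AEStronglyMeasurable g (volume.restrict (Ioo 0 1))) :
    ∫ x in Ioo 0 1, g (funInv h x) = ∫ y in Ioo 0 1, g y * h' y := by
  rw [Measure.restrict_congr_set Ioo_ae_eq_Ioc] at hg ⊢
  have hg' : AEStronglyMeasurable g ((volume.restrict (Ioc 0 1)).map (funInv h)) :=
    hh.map_funInv ▸ hg.mono_ac (withDensity_absolutelyContinuous _ _)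
  rw [← integral_map hh.aemeasurable_funInv hg', hh.map_funInv,
    integral_withDensity_eq_integral_toReal_smul hh.1.ennreal_ofReal
      (ae_of_all _ fun _ => ENNReal.ofReal_lt_top)]
  refine integral_congr_ae ((hh.nonneg_ae_Ioc le_rfl).mono fun y hy => ?_)
  dsimp only
  rw [ENNReal.toReal_ofReal hy, smul_eq_mul, mul_comm]

end IsTrimmingFun

theorem W2_trimmed_change_of_variables_general
    (α : ℝ)
    (P Q : Measure ℝ) (hP : IsProbabilityMeasure P) (hQ : IsProbabilityMeasure Q)
    (h h' : ℝ → ℝ) (hh : IsTrimmingFun α h h')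
    (Ph Qh : Measure ℝ)
    (hPhcdf : ∀ x, distFun Ph x = h (distFun P x))
    (hQhcdf : ∀ x, distFun Qh x = h (distFun Q x)) :
    W2 Ph Qh ^ 2 =
      ∫ x in Set.Ioo (0 : ℝ) 1, (quant P (funInv h x) - quant Q (funInv h x)) ^ 2 ∧
    W2 Ph Qh ^ 2 =
      ∫ y in Set.Ioo (0 : ℝ) 1, (quant P y - quant Q y) ^ 2 * h' y := by
  have hquant : ∀ t ∈ Ioo (0 : ℝ) 1,
      quant Ph t = quant P (funInv h t) ∧ quant Qh t = quant Q (funInv h t) := fun t ht =>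
    have ht1 : t ≤ h 1 := hh.2.2.2.symm ▸ ht.2.le
    ⟨quant_eq_quant_funInv P hh.continuousOn hh.monotoneOn hPhcdf ht1,
      quant_eq_quant_funInv Q hh.continuousOn hh.monotoneOn hQhcdf ht1⟩
  have hW2 : W2 Ph Qh ^ 2 =
      ∫ x in Ioo (0 : ℝ) 1, (quant P (funInv h x) - quant Q (funInv h x)) ^ 2 := by
    rw [W2_sq]
    exact setIntegral_congr_fun measurableSet_Ioo fun t ht => by
      rw [(hquant t ht).1, (hquant t ht).2]
  refine ⟨hW2, hW2.trans (hh.integral_comp_funInv (g := fun y => (quant P y - quant Q y) ^ 2) ?_)⟩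
  exact (((aemeasurable_quant P).sub (aemeasurable_quant Q)).pow_const 2).aestronglyMeasurable

/-- Change of variables for the common trimming distance: if
`h ∈ C_α` with derivative `h'` and `P_h`, `Q_h` are the probabilities with distribution
functions `h ∘ F`, `h ∘ G`, then
`W₂²(P_h, Q_h) = ∫₀¹ (F⁻¹(h⁻¹(x)) - G⁻¹(h⁻¹(x)))² dx
              = ∫₀¹ (F⁻¹(y) - G⁻¹(y))² h'(y) dy`. -/
theorem W2_trimmed_change_of_variables
    (α : ℝ) (hα0 : 0 ≤ α) (hα1 : α < 1)
    (P Q : Measure ℝ) (hP : IsProbabilityMeasure P) (hQ : IsProbabilityMeasure Q)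
    (hmP : FiniteSecondMoment P) (hmQ : FiniteSecondMoment Q)
    (h h' : ℝ → ℝ) (hh : IsTrimmingFun α h h')
    (Ph Qh : Measure ℝ)
    (hPh : IsProbabilityMeasure Ph) (hQh : IsProbabilityMeasure Qh)
    (hPhcdf : ∀ x, distFun Ph x = h (distFun P x))
    (hQhcdf : ∀ x, distFun Qh x = h (distFun Q x)) :
    W2 Ph Qh ^ 2 =
      ∫ x in Set.Ioo (0 : ℝ) 1, (quant P (funInv h x) - quant Q (funInv h x)) ^ 2 ∧
    W2 Ph Qh ^ 2 =
      ∫ y in Set.Ioo (0 : ℝ) 1, (quant P y - quant Q y) ^ 2 * h' y :=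
  W2_trimmed_change_of_variables_general α P Q hP hQ h h' hh Ph Qh hPhcdf hQhcdf

end
end
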